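/- arXiv:2301.01090 — 4 statements merged into one kernel-verified Lean document; each statement's English description precedes it below -/
import Mathlib

section
/- Let h > 0, M ≥ 0, and let u : ℝ → ℝ be twice continuously differentiable on [x − h/2, x + h/2]. Let ū = (1/h) ∫_{x−h/2}^{x+h/2} u(y) dy, define the switch function m̃(a) = −a if |a| ≤ M h² and m̃(a) = 0 otherwise, and define the reconstructed value u_new = ū + m̃(ū − u(x)). Then |u_new − u(x)| ≤ (h²/24) · sup_{y ∈ [x−h/2, x+h/2]} |u''(y)|; i.e., the TVB-type integral reconstruction is second-order accurate regardless of whether the switch is activated. -/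
/-!
Expanding `u` to first order at the midpoint `x`, Cauchy's mean value theorem against `(y - x)²`
bounds the remainder by `C (y - x)² / 2`, where `C` bounds `|u''|`. The linear term has zero mean
over the symmetric interval, so integrating gives the midpoint-rule error
`|∫ u - h u(x)| ≤ C h³ / 24`, i.e. `|ū - u(x)| ≤ C h² / 24`. The limiter returns either `u(x)`
itself or `ū`, so its error is `0` or `|ū - u(x)|`.
-/

open Set intervalIntegral
open MeasureTheory (volume)

theorem exists_uIoo_ratio_hasDerivAt_eq_ratio_slope {f f' g g' : ℝ → ℝ} {a b : ℝ} (hab : a ≠ b)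
    (hfc : ContinuousOn f (uIcc a b)) (hff' : ∀ t ∈ uIoo a b, HasDerivAt f (f' t) t)
    (hgc : ContinuousOn g (uIcc a b)) (hgg' : ∀ t ∈ uIoo a b, HasDerivAt g (g' t) t) :
    ∃ c ∈ uIoo a b, (g b - g a) * f' c = (f b - f a) * g' c := by
  rcases hab.lt_or_gt with hlt | hgt
  · rw [uIcc_of_le hlt.le] at hfc hgc
    rw [uIoo_of_lt hlt] at hff' hgg' ⊢
    exact exists_ratio_hasDerivAt_eq_ratio_slope f f' hlt hfc hff' g g' hgc hgg'
  · rw [uIcc_of_ge hgt.le] at hfc hgc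
    rw [uIoo_of_gt hgt] at hff' hgg' ⊢
    obtain ⟨c, hc, hslope⟩ := exists_ratio_hasDerivAt_eq_ratio_slope f f' hgt hfc hff' g g' hgc hgg'
    exact ⟨c, hc, by linear_combination -hslope⟩

theorem abs_sub_sub_mul_le_of_abs_deriv2_le {s : Set ℝ} (hs : Convex ℝ s) {u u' u'' : ℝ → ℝ}
    {C x y : ℝ} (hu : ∀ t ∈ s, HasDerivAt u (u' t) t) (hu' : ∀ t ∈ s, HasDerivAt u' (u'' t) t)
    (hC : ∀ t ∈ s, |u'' t| ≤ C) (hx : x ∈ s) (hy : y ∈ s) :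
    |u y - u x - u' x * (y - x)| ≤ C / 2 * (y - x) ^ 2 := by
  rcases eq_or_ne x y with rfl | hxy
  · simp
  have hsub : uIcc x y ⊆ s := (convex_iff_ordConnected.mp hs).uIcc_subset hx hy
  have hu'_lip : ∀ t ∈ s, |u' t - u' x| ≤ C * |t - x| := fun t ht =>
    hs.norm_image_sub_le_of_norm_hasDerivWithin_le (fun t ht => (hu' t ht).hasDerivWithinAt)
      hC hx ht
  obtain ⟨c, hc, hslope⟩ := exists_uIoo_ratio_hasDerivAt_eq_ratio_slope
    (f := fun t => u t - u' x * t) (f' := fun t => u' t - u' x)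
    (g := fun t => (t - x) ^ 2) (g' := fun t => 2 * (t - x)) hxy
    (fun t ht => ((hu t (hsub ht)).continuousAt.sub
      (continuousAt_const.mul continuousAt_id)).continuousWithinAt)
    (fun t ht => ((hu t (hsub (uIoo_subset_uIcc_self ht))).sub
      ((hasDerivAt_id' t).const_mul (u' x))).congr_deriv (by ring))
    (by fun_prop)
    (fun t _ => (((hasDerivAt_id' t).sub_const x).pow 2).congr_deriv (by ring))
  have hcx : 0 < |c - x| :=
    abs_pos.mpr (sub_ne_zero.mpr (ne_of_mem_of_not_mem hc left_notMem_uIoo))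
  have key : |u y - u x - u' x * (y - x)| * (2 * |c - x|) = (y - x) ^ 2 * |u' c - u' x| := by
    calc _ = |(u y - u x - u' x * (y - x)) * (2 * (c - x))| := by rw [abs_mul, abs_mul, abs_two]
      _ = |(y - x) ^ 2 * (u' c - u' x)| := by congr 1; linear_combination -hslope
      _ = _ := by rw [abs_mul, abs_sq]
  refine le_of_mul_le_mul_right ?_ (by positivity : 0 < 2 * |c - x|)
  calc _ = (y - x) ^ 2 * |u' c - u' x| := key
    _ ≤ (y - x) ^ 2 * (C * |c - x|) := by
      gcongr; exact hu'_lip c (hsub (uIoo_subset_uIcc_self hc))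
    _ = _ := by ring

theorem integral_sub_center (x h : ℝ) : ∫ y in (x - h / 2)..(x + h / 2), (y - x) = 0 := by
  simp only [integral_comp_sub_right fun y => y, integral_id]
  ring

theorem integral_sq_sub_center (x h : ℝ) :
    ∫ y in (x - h / 2)..(x + h / 2), (y - x) ^ 2 = h ^ 3 / 12 := by
  simp only [integral_comp_sub_right fun y => y ^ 2, integral_pow]
  ring

theorem abs_integral_sub_mul_midpoint_le {x h C : ℝ} (hh : 0 ≤ h) {u u' u'' : ℝ → ℝ}
    (hu : ∀ t ∈ Icc (x - h / 2) (x + h / 2), HasDerivAt u (u' t) t)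
    (hu' : ∀ t ∈ Icc (x - h / 2) (x + h / 2), HasDerivAt u' (u'' t) t)
    (hC : ∀ t ∈ Icc (x - h / 2) (x + h / 2), |u'' t| ≤ C) :
    |(∫ y in (x - h / 2)..(x + h / 2), u y) - h * u x| ≤ C * h ^ 3 / 24 := by
  have hle : x - h / 2 ≤ x + h / 2 := by linarith
  have hx : x ∈ Icc (x - h / 2) (x + h / 2) := ⟨by linarith, by linarith⟩
  have hu_int : IntervalIntegrable u volume (x - h / 2) (x + h / 2) :=
    ContinuousOn.intervalIntegrable fun t ht =>
      (hu t (uIcc_of_le hle ▸ ht)).continuousAt.continuousWithinAt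
  have hlin_int : IntervalIntegrable (fun y => u x + u' x * (y - x)) volume
      (x - h / 2) (x + h / 2) :=
    (by fun_prop : Continuous _).intervalIntegrable _ _
  have hremainder : ∫ y in (x - h / 2)..(x + h / 2), (u y - (u x + u' x * (y - x))) =
      (∫ y in (x - h / 2)..(x + h / 2), u y) - h * u x := by
    rw [integral_sub hu_int hlin_int, integral_add intervalIntegrable_const
      ((by fun_prop : Continuous _).intervalIntegrable _ _),
      integral_const, integral_const_mul, integral_sub_center, smul_eq_mul]
    ring
  rw [← hremainder, ← Real.norm_eq_abs]
  calc _ ≤ ∫ y in (x - h / 2)..(x + h / 2), C / 2 * (y - x) ^ 2 := by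
        refine norm_integral_le_of_norm_le (μ := volume) hle
          (Filter.Eventually.of_forall fun y hy => ?_)
          ((by fun_prop : Continuous fun y => C / 2 * (y - x) ^ 2).intervalIntegrable _ _)
        rw [Real.norm_eq_abs, ← sub_sub]
        exact abs_sub_sub_mul_le_of_abs_deriv2_le (convex_Icc _ _) hu hu' hC hx
          (Ioc_subset_Icc_self hy)
    _ = C * h ^ 3 / 24 := by rw [integral_const_mul, integral_sq_sub_center]; ring

theorem IsCompact.le_ciSup_of_continuousOn {α β : Type*} [TopologicalSpace α]
    [ConditionallyCompleteLinearOrder β] [TopologicalSpace β] [ClosedIciTopology β] {s : Set α}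
    (hs : IsCompact s) {f : α → β} (hf : ContinuousOn f s) {y : α} (hy : y ∈ s) :
    f y ≤ ⨆ z : s, f z :=
  have : Nonempty β := ⟨f y⟩
  le_ciSup (f := fun z : s => f z) (image_eq_range f s ▸ hs.bddAbove_image hf) ⟨y, hy⟩

theorem tvb_integral_reconstruction_second_order_general
    (x h M : ℝ) (hh : 0 < h) (u u' u'' : ℝ → ℝ)
    (hu' : ∀ y ∈ Set.Icc (x - h / 2) (x + h / 2), HasDerivAt u (u' y) y)
    (hu'' : ∀ y ∈ Set.Icc (x - h / 2) (x + h / 2), HasDerivAt u' (u'' y) y)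
    (hcont : ContinuousOn u'' (Set.Icc (x - h / 2) (x + h / 2)))
    (ubar : ℝ) (hubar : ubar = (1 / h) * ∫ y in (x - h / 2)..(x + h / 2), u y)
    (mt : ℝ → ℝ) (hmt : ∀ a : ℝ, mt a = if |a| ≤ M * h ^ 2 then -a else 0)
    (unew : ℝ) (hunew : unew = ubar + mt (ubar - u x)) :
    |unew - u x| ≤ h ^ 2 / 24 * ⨆ y : Set.Icc (x - h / 2) (x + h / 2), |u'' y| := by
  set C := ⨆ y : Set.Icc (x - h / 2) (x + h / 2), |u'' y|
  have hC : ∀ y ∈ Icc (x - h / 2) (x + h / 2), |u'' y| ≤ C := fun y hy =>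
    isCompact_Icc.le_ciSup_of_continuousOn hcont.abs hy
  have hC_nonneg : 0 ≤ C := (abs_nonneg _).trans (hC x ⟨by linarith, by linarith⟩)
  have hubar_sub : |ubar - u x| ≤ h ^ 2 / 24 * C := by
    have hmid := abs_integral_sub_mul_midpoint_le hh.le hu' hu'' hC
    have hdiv : ubar - u x = ((∫ y in (x - h / 2)..(x + h / 2), u y) - h * u x) / h := by
      rw [hubar]; field_simp
    rw [hdiv, abs_div, abs_of_pos hh, div_le_iff₀ hh]
    exact hmid.trans_eq (by ring)
  rw [hunew, hmt]
  split_ifs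
  · simpa using mul_nonneg (by positivity) hC_nonneg
  · simpa using hubar_sub

/-- The TVB-type integral reconstruction `u_new = ū + m̃(ū - u x)`, where
`m̃(a) = -a` if `|a| ≤ M h²` and `m̃(a) = 0` otherwise, is second-order accurate:
`|u_new - u x| ≤ (h²/24) · sup |u''|` regardless of whether the switch is activated. -/
theorem tvb_integral_reconstruction_second_order
    (x h M : ℝ) (hh : 0 < h) (hM : 0 ≤ M) (u u' u'' : ℝ → ℝ)
    (hu' : ∀ y ∈ Set.Icc (x - h / 2) (x + h / 2), HasDerivAt u (u' y) y)
    (hu'' : ∀ y ∈ Set.Icc (x - h / 2) (x + h / 2), HasDerivAt u' (u'' y) y)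
    (hcont : ContinuousOn u'' (Set.Icc (x - h / 2) (x + h / 2)))
    (ubar : ℝ) (hubar : ubar = (1 / h) * ∫ y in (x - h / 2)..(x + h / 2), u y)
    (mt : ℝ → ℝ) (hmt : ∀ a : ℝ, mt a = if |a| ≤ M * h ^ 2 then -a else 0)
    (unew : ℝ) (hunew : unew = ubar + mt (ubar - u x)) :
    |unew - u x| ≤ h ^ 2 / 24 * ⨆ y : Set.Icc (x - h / 2) (x + h / 2), |u'' y| :=
  tvb_integral_reconstruction_second_order_general x h M hh u u' u'' hu' hu'' hcont ubar hubar mt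
    hmt unew hunew
end

section
/- Let h₀ > 0 and let f : ℝ → ℝ be three times continuously differentiable on an open interval containing [x − h₀, x + h₀]. Define the smoothness indicator IS(h) = (13/12)(f(x−h) − 2f(x) + f(x+h))² + (1/4)(f(x−h) − f(x+h))². Then there exists a constant C ≥ 0 such that for all h with 0 < h ≤ h₀, |IS(h) − (f'(x))² h²| ≤ C h⁴. -/
/-!
Write `u = f'(x)`, `w = f''(x)`. Taylor's theorem with the remainder bounded on the compact
interval `[x - h₀, x + h₀]` gives `f(x ± h) = f(x) ± u h + w h²/2 + O(h³)` uniformly in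
`0 < h ≤ h₀`. Hence the second difference `f(x-h) - 2f(x) + f(x+h)` is `O(h²)` and the first
difference `f(x-h) - f(x+h)` is `-2uh + O(h³)`; squaring, both the `13/12` term and the
deviation of the `1/4` term from `u²h²` are `O(h⁴)`.
-/

open Set

theorem taylorWithinEval_two_Icc {f : ℝ → ℝ} {a b : ℝ} (hab : a < b) (hf : ContDiffAt ℝ 2 f a)
    (y : ℝ) :
    taylorWithinEval f 2 (Icc a b) a y
      = f a + deriv f a * (y - a) + deriv (deriv f) a * (y - a) ^ 2 / 2 := by
  have hderiv (k : ℕ) (hk : k ≤ 2) : iteratedDerivWithin k f (Icc a b) a = iteratedDeriv k f a :=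
    iteratedDerivWithin_eq_iteratedDeriv (uniqueDiffOn_Icc hab) (hf.of_le (by exact_mod_cast hk))
      (left_mem_Icc.2 hab.le)
  rw [taylor_within_apply]
  simp [Finset.sum_range_succ, hderiv, iteratedDeriv_succ]
  ring

theorem exists_abs_taylor_two_remainder_le_right {f : ℝ → ℝ} {s : Set ℝ} {a r : ℝ} (hr : 0 < r)
    (hs : IsOpen s) (hsub : Icc a (a + r) ⊆ s) (hf : ContDiffOn ℝ 3 f s) :
    ∃ M, 0 ≤ M ∧ ∀ h ∈ Icc 0 r,
      |f (a + h) - f a - deriv f a * h - deriv (deriv f) a * h ^ 2 / 2| ≤ M * h ^ 3 := by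
  have hab : a < a + r := by linarith
  obtain ⟨C, hC⟩ := exists_taylor_mean_remainder_bound (n := 2) hab.le (hf.mono hsub)
  have hfa : ContDiffAt ℝ 2 f a :=
    (hf.contDiffAt (hs.mem_nhds (hsub (left_mem_Icc.2 hab.le)))).of_le (by norm_num)
  refine ⟨max C 0, le_max_right _ _, fun h hh => ?_⟩
  have hmem : a + h ∈ Icc a (a + r) := ⟨by linarith [hh.1], by linarith [hh.2]⟩
  have := hC (a + h) hmem
  rw [taylorWithinEval_two_Icc hab hfa, Real.norm_eq_abs, add_sub_cancel_left] at this
  calc _ = |f (a + h) - (f a + deriv f a * h + deriv (deriv f) a * h ^ 2 / 2)| := by ring_nf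
    _ ≤ C * h ^ 3 := this
    _ ≤ max C 0 * h ^ 3 := by have := hh.1; gcongr; exact le_max_left _ _

theorem exists_abs_taylor_two_remainder_le {f : ℝ → ℝ} {s : Set ℝ} {a r : ℝ} (hr : 0 < r)
    (hs : IsOpen s) (hsub : Icc (a - r) (a + r) ⊆ s) (hf : ContDiffOn ℝ 3 f s) :
    ∃ M, 0 ≤ M ∧ ∀ h, |h| ≤ r →
      |f (a + h) - f a - deriv f a * h - deriv (deriv f) a * h ^ 2 / 2| ≤ M * |h| ^ 3 := by
  obtain ⟨Mr, hMr, hright⟩ := exists_abs_taylor_two_remainder_le_right hr hs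
    ((Icc_subset_Icc_left (by linarith)).trans hsub) hf
  -- the left half is the right half for the reflection `t ↦ f (-t)` at `-a`
  have hsub' : Icc (-a) (-a + r) ⊆ -s := fun t ht => hsub ⟨by linarith [ht.2], by linarith [ht.1]⟩
  obtain ⟨Ml, hMl, hleft⟩ := exists_abs_taylor_two_remainder_le_right (f := fun t => f (-t)) hr
    hs.neg hsub' (hf.comp contDiff_neg.contDiffOn fun _ ht => ht)
  have hderiv₂ : deriv (deriv fun t => f (-t)) = fun t => deriv (deriv f) (-t) := by
    funext t
    rw [show (deriv fun t => f (-t)) = -fun t => deriv f (-t) from funext (deriv_comp_neg f),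
      deriv.neg, deriv_comp_neg, neg_neg]
  refine ⟨max Mr Ml, le_max_of_le_left hMr, fun h hh => ?_⟩
  rcases le_total 0 h with h0 | h0
  · rw [abs_of_nonneg h0] at hh ⊢
    exact (hright h ⟨h0, hh⟩).trans (by gcongr; exact le_max_left _ _)
  · rw [abs_of_nonpos h0] at hh ⊢
    have hnh : 0 ≤ -h := neg_nonneg.2 h0
    have := hleft (-h) ⟨hnh, hh⟩
    rw [deriv_comp_neg, hderiv₂] at this
    simp only [neg_add_rev, neg_neg, neg_sq] at this
    calc _ = |f (h + a) - f a - -deriv f a * -h - deriv (deriv f) a * h ^ 2 / 2| := by ring_nf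
      _ ≤ Ml * (-h) ^ 3 := this
      _ ≤ max Mr Ml * (-h) ^ 3 := by gcongr; exact le_max_right _ _

noncomputable def smoothnessIndicator (f : ℝ → ℝ) (x h : ℝ) : ℝ :=
  (13 / 12) * (f (x - h) - 2 * f x + f (x + h)) ^ 2 + (1 / 4) * (f (x - h) - f (x + h)) ^ 2

theorem abs_smoothnessIndicator_sub_le {f : ℝ → ℝ} {x h r M u w : ℝ} (hM : 0 ≤ M) (h0 : 0 ≤ h)
    (hr : h ≤ r)
    (hrem : ∀ t, |t| ≤ r → |f (x + t) - f x - u * t - w * t ^ 2 / 2| ≤ M * |t| ^ 3) :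
    |smoothnessIndicator f x h - u ^ 2 * h ^ 2|
      ≤ (13 / 12 * (2 * M * r + |w|) ^ 2 + M ^ 2 * r ^ 2 + 2 * |u| * M) * h ^ 4 := by
  have hP := hrem h (by rwa [abs_of_nonneg h0])
  have hQ := hrem (-h) (by rwa [abs_neg, abs_of_nonneg h0])
  rw [abs_of_nonneg h0] at hP
  rw [abs_neg, abs_of_nonneg h0, ← sub_eq_add_neg, neg_sq] at hQ
  set P := f (x + h) - f x - u * h - w * h ^ 2 / 2
  set Q := f (x - h) - f x - u * -h - w * h ^ 2 / 2
  have hidentity : smoothnessIndicator f x h - u ^ 2 * h ^ 2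
      = 13 / 12 * (P + Q + w * h ^ 2) ^ 2 + 1 / 4 * ((Q - P) * (Q - P - 4 * u * h)) := by
    unfold smoothnessIndicator; ring
  have hh3 : h ^ 3 ≤ r * h ^ 2 := by rw [pow_succ']; gcongr
  have hsecond : |P + Q + w * h ^ 2| ≤ (2 * M * r + |w|) * h ^ 2 := by
    calc |P + Q + w * h ^ 2| ≤ |P| + |Q| + |w| * h ^ 2 :=
          (abs_add_three _ _ _).trans_eq (by rw [abs_mul, abs_of_nonneg (sq_nonneg h)])
      _ ≤ _ := by nlinarith [mul_le_mul_of_nonneg_left hh3 hM]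
  have hfirst : |Q - P| ≤ 2 * M * h ^ 3 := by linarith [abs_sub Q P]
  have hshift : |Q - P - 4 * u * h| ≤ |Q - P| + 4 * |u| * h := by
    simpa [abs_mul, abs_of_nonneg h0, mul_assoc] using abs_sub (Q - P) (4 * u * h)
  rw [hidentity]
  calc _ ≤ |13 / 12 * (P + Q + w * h ^ 2) ^ 2| + |1 / 4 * ((Q - P) * (Q - P - 4 * u * h))| :=
        abs_add_le _ _
    _ = 13 / 12 * |P + Q + w * h ^ 2| ^ 2 + 1 / 4 * (|Q - P| * |Q - P - 4 * u * h|) := by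
        simp only [abs_mul, abs_pow, abs_of_pos (by norm_num : (0 : ℝ) < 13 / 12),
          abs_of_pos (by norm_num : (0 : ℝ) < 1 / 4)]
    _ ≤ 13 / 12 * |P + Q + w * h ^ 2| ^ 2 + 1 / 4 * (|Q - P| * (|Q - P| + 4 * |u| * h)) := by
        gcongr
    _ ≤ 13 / 12 * ((2 * M * r + |w|) * h ^ 2) ^ 2
          + 1 / 4 * (2 * M * h ^ 3 * (2 * M * h ^ 3 + 4 * |u| * h)) := by gcongr
    _ ≤ _ := by nlinarith [pow_le_pow_left₀ (by positivity) (mul_le_mul_of_nonneg_left hh3 hM) 2]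

/-- For `f` three times continuously differentiable on an open interval containing
`[x - h₀, x + h₀]`, the Jiang–Shu smoothness indicator
`IS(h) = (13/12)(f(x-h) - 2f(x) + f(x+h))² + (1/4)(f(x-h) - f(x+h))²`
satisfies `|IS(h) - (f'(x))² h²| ≤ C h⁴` for all `0 < h ≤ h₀`. -/
theorem smoothness_indicator_fourth_order
    (x h₀ : ℝ) (hh₀ : 0 < h₀) (f : ℝ → ℝ) (s : Set ℝ) (hs : IsOpen s)
    (hsub : Set.Icc (x - h₀) (x + h₀) ⊆ s) (hf : ContDiffOn ℝ 3 f s) :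
    ∃ C : ℝ, 0 ≤ C ∧ ∀ h : ℝ, 0 < h → h ≤ h₀ →
      |((13 / 12) * (f (x - h) - 2 * f x + f (x + h)) ^ 2
          + (1 / 4) * (f (x - h) - f (x + h)) ^ 2)
        - (deriv f x) ^ 2 * h ^ 2| ≤ C * h ^ 4 := by
  obtain ⟨M, hM, hrem⟩ := exists_abs_taylor_two_remainder_le hh₀ hs hsub hf
  exact ⟨13 / 12 * (2 * M * h₀ + |deriv (deriv f) x|) ^ 2 + M ^ 2 * h₀ ^ 2
      + 2 * |deriv f x| * M, by positivity,
    fun h h0 hh => abs_smoothnessIndicator_sub_le hM h0.le hh hrem⟩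
end

section
/- Let f : ℝ → ℝ be three times continuously differentiable on an open interval containing x, with f'(x) ≠ 0, and define IS(h) = (13/12)(f(x−h) − 2f(x) + f(x+h))² + (1/4)(f(x−h) − f(x+h))². Then IS(h)/((f'(x))² h²) tends to 1 as h tends to 0 from the right; that is, IS(h) = (f'(x) h)² (1 + O(h²)) in the sense that the relative error tends to zero. -/
/-!
Only the first-order expansion at `x` matters: with `d = f'(x)`, the second difference
`f(x-h) - 2f(x) + f(x+h)` is `o(h)` and the central difference `f(x+h) - f(x-h)` is `2dh + o(h)`,
so `IS(h) / (d²h²) → (13/12 · 0² + 1/4 · (2d)²) / d² = 1`. Differentiability at `x` comes from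
`deriv f x ≠ 0`, since `deriv` is `0` wherever `f` is not differentiable.
-/

open Filter Topology

namespace HasDerivAt

variable {f : ℝ → ℝ} {x d : ℝ}

theorem tendsto_backward_slope_zero (hf : HasDerivAt f d x) :
    Tendsto (fun h => (f (x - h) - f x) / h) (𝓝[≠] 0) (𝓝 (-d)) := by
  have hreflect : HasDerivAt (fun h => f (x - h)) (-d) 0 :=
    HasDerivAt.comp_const_sub x 0 (by simpa using hf)
  simpa [div_eq_inv_mul] using hreflect.tendsto_slope_zero

theorem tendsto_forward_slope_zero (hf : HasDerivAt f d x) :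
    Tendsto (fun h => (f (x + h) - f x) / h) (𝓝[≠] 0) (𝓝 d) := by
  simpa [div_eq_inv_mul] using hf.tendsto_slope_zero

theorem tendsto_second_difference_div (hf : HasDerivAt f d x) :
    Tendsto (fun h => (f (x - h) - 2 * f x + f (x + h)) / h) (𝓝[≠] 0) (𝓝 0) := by
  have hsum := hf.tendsto_backward_slope_zero.add hf.tendsto_forward_slope_zero
  rw [neg_add_cancel] at hsum
  refine hsum.congr fun h => ?_
  ring

theorem tendsto_central_difference_div (hf : HasDerivAt f d x) :
    Tendsto (fun h => (f (x + h) - f (x - h)) / h) (𝓝[≠] 0) (𝓝 (2 * d)) := by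
  have hdiff := hf.tendsto_forward_slope_zero.sub hf.tendsto_backward_slope_zero
  rw [sub_neg_eq_add, ← two_mul] at hdiff
  refine hdiff.congr fun h => ?_
  ring

theorem tendsto_smoothness_indicator_div (hf : HasDerivAt f d x) (hd : d ≠ 0) :
    Tendsto
      (fun h => ((13 / 12) * (f (x - h) - 2 * f x + f (x + h)) ^ 2
          + (1 / 4) * (f (x - h) - f (x + h)) ^ 2) / (d ^ 2 * h ^ 2))
      (𝓝[≠] 0) (𝓝 1) := by
  have hlim := ((hf.tendsto_second_difference_div.pow 2).const_mul (13 / 12)).add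
    ((hf.tendsto_central_difference_div.pow 2).const_mul (1 / 4)) |>.div_const (d ^ 2)
  have hvalue : ((13 / 12) * (0 : ℝ) ^ 2 + (1 / 4) * (2 * d) ^ 2) / d ^ 2 = 1 := by
    field_simp
    ring
  rw [hvalue] at hlim
  refine hlim.congr' ?_
  filter_upwards [self_mem_nhdsWithin] with h (hh : h ≠ 0)
  field_simp
  ring

end HasDerivAt

theorem smoothness_indicator_relative_limit_general
    (x : ℝ) (f : ℝ → ℝ) (hf' : deriv f x ≠ 0) :
    Filter.Tendsto
      (fun h : ℝ =>
        ((13 / 12) * (f (x - h) - 2 * f x + f (x + h)) ^ 2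
          + (1 / 4) * (f (x - h) - f (x + h)) ^ 2) / ((deriv f x) ^ 2 * h ^ 2))
      (nhdsWithin 0 (Set.Ioi 0)) (nhds 1) :=
  ((differentiableAt_of_deriv_ne_zero hf').hasDerivAt.tendsto_smoothness_indicator_div
    hf').mono_left (nhdsGT_le_nhdsNE 0)

/-- For `f` three times continuously differentiable on an open interval containing `x`
with `f'(x) ≠ 0`, the Jiang–Shu smoothness indicator satisfies
`IS(h) / ((f'(x))² h²) → 1` as `h → 0⁺`. -/
theorem smoothness_indicator_relative_limit
    (x : ℝ) (f : ℝ → ℝ) (s : Set ℝ) (hs : IsOpen s) (hxs : x ∈ s)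
    (hf : ContDiffOn ℝ 3 f s) (hf' : deriv f x ≠ 0) :
    Filter.Tendsto
      (fun h : ℝ =>
        ((13 / 12) * (f (x - h) - 2 * f x + f (x + h)) ^ 2
          + (1 / 4) * (f (x - h) - f (x + h)) ^ 2) / ((deriv f x) ^ 2 * h ^ 2))
      (nhdsWithin 0 (Set.Ioi 0)) (nhds 1) :=
  smoothness_indicator_relative_limit_general x f hf'
end

section
/- Let φ : ℝ → ℝ satisfy φ(n) = 1 if n = 0 and φ(n) = 0 for every nonzero integer n. Let J₀ ≤ J_max be natural numbers, let F₀ ⊂ ℤ and F_J ⊂ ℤ (for J₀ ≤ J < J_max) be finite index sets, let c : F₀ → ℝ and d_J : F_J → ℝ be coefficients, and define g(x) = ∑_{k ∈ F₀} c(k) φ(2^{J₀} x − k) + ∑_{J = J₀}^{J_max − 1} ∑_{k ∈ F_J} d_J(k) φ(2^{J+1} x − (2k + 1)). Then for every level J' with J₀ ≤ J' < J_max and every l ∈ F_{J'}, evaluating at the point y = (2l + 1)/2^{J'+1} gives d_{J'}(l) = g(y) − ∑_{k ∈ F₀} c(k) φ(2^{J₀} y − k) − ∑_{J = J₀}^{J'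 − 1} ∑_{k ∈ F_J} d_J(k) φ(2^{J+1} y − (2k + 1)); that is, all wavelet terms of level strictly greater than J' vanish at y and the level-J' terms contribute exactly d_{J'}(l). -/
/-! At the odd dyadic point `y = (2l+1)/2^{J'+1}`, the argument `2^{J+1} y - (2k+1)` of every
wavelet of level `J ≥ J'` is the integer `2^{J-J'}(2l+1) - (2k+1)`. For `J > J'` it is odd,
so the wavelet vanishes; for `J = J'` it is `2(l-k)`, so only the term `k = l` survives. -/

section InterpolatingWavelet

variable {φ : ℝ → ℝ}

lemma two_pow_mul_odd_dyadic_sub_odd (J' t : ℕ) (k l : ℤ) :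
    (2 : ℝ) ^ (J' + t + 1) * (((2 * l + 1 : ℤ) : ℝ) / 2 ^ (J' + 1)) - (2 * (k : ℝ) + 1)
      = ((2 ^ t * (2 * l + 1) - (2 * k + 1) : ℤ) : ℝ) := by
  rw [show J' + t + 1 = t + (J' + 1) by ring, pow_add]
  field_simp
  push_cast
  ring

lemma wavelet_odd_dyadic_eq_zero_of_lt (hφ : ∀ n : ℤ, n ≠ 0 → φ (n : ℝ) = 0)
    {J' J : ℕ} (hJ : J' < J) (k l : ℤ) :
    φ (2 ^ (J + 1) * (((2 * l + 1 : ℤ) : ℝ) / 2 ^ (J' + 1)) - (2 * (k : ℝ) + 1)) = 0 := by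
  obtain ⟨t, rfl⟩ := Nat.exists_eq_add_of_lt hJ
  rw [show J' + t + 1 + 1 = J' + (t + 1) + 1 by ring, two_pow_mul_odd_dyadic_sub_odd]
  refine hφ _ ?_
  rw [pow_succ, mul_comm _ (2 : ℤ), mul_assoc]
  generalize (2 : ℤ) ^ t * (2 * l + 1) = m
  omega

lemma wavelet_odd_dyadic_self (hφ0 : φ 0 = 1) (hφ : ∀ n : ℤ, n ≠ 0 → φ (n : ℝ) = 0)
    (J : ℕ) (k l : ℤ) :
    φ (2 ^ (J + 1) * (((2 * l + 1 : ℤ) : ℝ) / 2 ^ (J + 1)) - (2 * (k : ℝ) + 1))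
      = if k = l then 1 else 0 := by
  have h := two_pow_mul_odd_dyadic_sub_odd J 0 k l
  rw [add_zero, pow_zero, one_mul] at h
  rw [h]
  split_ifs with hkl
  · simp [hkl, hφ0]
  · exact hφ _ (by omega)

lemma sum_mul_wavelet_odd_dyadic_self (hφ0 : φ 0 = 1) (hφ : ∀ n : ℤ, n ≠ 0 → φ (n : ℝ) = 0)
    (J : ℕ) (s : Finset ℤ) (a : ℤ → ℝ) {l : ℤ} (hl : l ∈ s) :
    ∑ k ∈ s, a k * φ (2 ^ (J + 1) * (((2 * l + 1 : ℤ) : ℝ) / 2 ^ (J + 1)) - (2 * (k : ℝ) + 1))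
      = a l := by
  simp only [wavelet_odd_dyadic_self hφ0 hφ, mul_ite, mul_one, mul_zero,
    Finset.sum_ite_eq', if_pos hl]

end InterpolatingWavelet

theorem reversed_fast_wavelet_transform_general
    (φ : ℝ → ℝ) (hφ0 : φ 0 = 1) (hφ : ∀ n : ℤ, n ≠ 0 → φ (n : ℝ) = 0)
    (J₀ Jmax : ℕ)
    (F₀ : Finset ℤ) (F : ℕ → Finset ℤ) (c : ℤ → ℝ) (d : ℕ → ℤ → ℝ)
    (g : ℝ → ℝ)
    (hg : ∀ x : ℝ, g x = (∑ k ∈ F₀, c k * φ (2 ^ J₀ * x - (k : ℝ)))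
        + ∑ J ∈ Finset.Ico J₀ Jmax, ∑ k ∈ F J,
            d J k * φ (2 ^ (J + 1) * x - (2 * (k : ℝ) + 1)))
    (J' : ℕ) (hJ'₁ : J₀ ≤ J') (hJ'₂ : J' < Jmax) (l : ℤ) (hl : l ∈ F J') :
    d J' l = g (((2 * l + 1 : ℤ) : ℝ) / 2 ^ (J' + 1))
        - (∑ k ∈ F₀, c k * φ (2 ^ J₀ * (((2 * l + 1 : ℤ) : ℝ) / 2 ^ (J' + 1)) - (k : ℝ)))
        - ∑ J ∈ Finset.Ico J₀ J', ∑ k ∈ F J,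
            d J k * φ (2 ^ (J + 1) * (((2 * l + 1 : ℤ) : ℝ) / 2 ^ (J' + 1))
              - (2 * (k : ℝ) + 1)) := by
  have higher_levels_vanish : ∀ J ∈ Finset.Ico (J' + 1) Jmax, ∑ k ∈ F J,
      d J k * φ (2 ^ (J + 1) * (((2 * l + 1 : ℤ) : ℝ) / 2 ^ (J' + 1)) - (2 * (k : ℝ) + 1))
        = 0 := fun J hJ => Finset.sum_eq_zero fun k _ => by
    rw [wavelet_odd_dyadic_eq_zero_of_lt hφ (Finset.mem_Ico.1 hJ).1, mul_zero]
  rw [hg, ← Finset.sum_Ico_consecutive _ hJ'₁ hJ'₂.le, Finset.sum_eq_sum_Ico_succ_bot hJ'₂,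
    Finset.sum_eq_zero higher_levels_vanish, sum_mul_wavelet_odd_dyadic_self hφ0 hφ _ _ _ hl]
  ring

/-- Validity of the reversed fast wavelet transform: for an interpolating scaling
function `φ` (with `φ(n) = δ_{0,n}` on ℤ) and a multiresolution expansion
`g(x) = ∑_{k ∈ F₀} c(k) φ(2^{J₀} x - k)
        + ∑_{J=J₀}^{J_max-1} ∑_{k ∈ F_J} d_J(k) φ(2^{J+1} x - (2k+1))`,
evaluating at the odd dyadic point `y = (2l+1)/2^{J'+1}` with `J₀ ≤ J' < J_max` and
`l ∈ F_{J'}` recovers the coefficient: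
`d_{J'}(l) = g(y) - ∑_{k ∈ F₀} c(k) φ(2^{J₀} y - k)
             - ∑_{J=J₀}^{J'-1} ∑_{k ∈ F_J} d_J(k) φ(2^{J+1} y - (2k+1))`,
since all wavelet terms of level strictly greater than `J'` vanish at `y` and the
level-`J'` terms contribute exactly `d_{J'}(l)`. -/
theorem reversed_fast_wavelet_transform
    (φ : ℝ → ℝ) (hφ0 : φ 0 = 1) (hφ : ∀ n : ℤ, n ≠ 0 → φ (n : ℝ) = 0)
    (J₀ Jmax : ℕ) (hJ : J₀ ≤ Jmax)
    (F₀ : Finset ℤ) (F : ℕ → Finset ℤ) (c : ℤ → ℝ) (d : ℕ → ℤ → ℝ)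
    (g : ℝ → ℝ)
    (hg : ∀ x : ℝ, g x = (∑ k ∈ F₀, c k * φ (2 ^ J₀ * x - (k : ℝ)))
        + ∑ J ∈ Finset.Ico J₀ Jmax, ∑ k ∈ F J,
            d J k * φ (2 ^ (J + 1) * x - (2 * (k : ℝ) + 1)))
    (J' : ℕ) (hJ'₁ : J₀ ≤ J') (hJ'₂ : J' < Jmax) (l : ℤ) (hl : l ∈ F J') :
    d J' l = g (((2 * l + 1 : ℤ) : ℝ) / 2 ^ (J' + 1))
        - (∑ k ∈ F₀, c k * φ (2 ^ J₀ * (((2 * l + 1 : ℤ) : ℝ) / 2 ^ (J' + 1)) - (k : ℝ)))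
        - ∑ J ∈ Finset.Ico J₀ J', ∑ k ∈ F J,
            d J k * φ (2 ^ (J + 1) * (((2 * l + 1 : ℤ) : ℝ) / 2 ^ (J' + 1))
              - (2 * (k : ℝ) + 1)) :=
  reversed_fast_wavelet_transform_general φ hφ0 hφ J₀ Jmax F₀ F c d g hg J' hJ'₁ hJ'₂ l hl
end
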